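/- Let R be a commutative Noetherian ring and M a finitely generated R-module. Then M is reflexive (i.e. the canonical evaluation map ev_M : M → Hom_R(Hom_R(M,R),R) is bijective) if and only if M is isomorphic as an R-module to its double dual Hom_R(Hom_R(M,R),R) (by some, not necessarily the canonical, isomorphism). -/

import Mathlib

/-!
For any module `M`, the dual of `ev_M` is a left inverse of `ev_{M*}`, so `M*` is reflexive as
soon as `ev_M.dualMap : M*** → M*` is injective. An isomorphism `M ≃ M**` dualizes to
`M*** ≃ M*`, and over a Noetherian ring `M*` is a Noetherian module, so the surjection
`ev_M.dualMap` is injective by Orzech's theorem. Hence `M*`, and with it `M**` and `M ≃ M**`, is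
reflexive.
-/

open Function

namespace Module

section CommSemiring

variable {R M : Type*} [CommSemiring R] [AddCommMonoid M] [Module R M]

lemma Dual.leftInverse_dualMap_eval :
    LeftInverse (Dual.eval R M).dualMap (Dual.eval R (Dual R M)) :=
  fun _ ↦ rfl

lemma IsReflexive.dual_of_injective_dualMap_eval (h : Function.Injective (Dual.eval R M).dualMap) :
    IsReflexive R (Dual R M) :=
  ⟨Dual.leftInverse_dualMap_eval.injective,
    (Dual.leftInverse_dualMap_eval.rightInverse_of_injective h).surjective⟩

end CommSemiring

section CommRing

variable {R M : Type*} [CommRing R] [AddCommGroup M] [Module R M]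

lemma IsReflexive.dual_of_equiv_dual_dual_dual [IsNoetherian R (Dual R M)]
    (e : Dual R (Dual R (Dual R M)) ≃ₗ[R] Dual R M) : IsReflexive R (Dual R M) :=
  dual_of_injective_dualMap_eval <| IsNoetherian.injective_of_surjective_of_injective
    e.toLinearMap _ e.injective Dual.leftInverse_dualMap_eval.surjective

lemma IsReflexive.of_equiv_dual_dual [IsNoetherian R (Dual R M)]
    (e : M ≃ₗ[R] Dual R (Dual R M)) : IsReflexive R M :=
  have := dual_of_equiv_dual_dual_dual e.dualMap
  equiv e.symm

end CommRing

end Module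

/-- Over a commutative Noetherian ring, a finitely generated module `M` is reflexive
(the canonical evaluation map `M → M**` is bijective) if and only if `M` is isomorphic,
by some possibly non-canonical isomorphism, to its double dual. -/
theorem stmt_0 (R : Type*) [CommRing R] [IsNoetherianRing R]
    (M : Type*) [AddCommGroup M] [Module R M] [Module.Finite R M] :
    Function.Bijective (Module.Dual.eval R M) ↔
      Nonempty (M ≃ₗ[R] Module.Dual R (Module.Dual R M)) :=
  ⟨fun h ↦ ⟨.ofBijective _ h⟩, fun ⟨e⟩ ↦
    have := Module.IsReflexive.of_equiv_dual_dual e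
    Module.bijective_dual_eval R M⟩
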